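/- arXiv:2109.02377 — 3 statements merged into one kernel-verified Lean document; each statement's English description precedes it below -/
import Mathlib

section
/- Let {M_i}_{i∈ℤ} ⊆ ℝ^{l×m} and {N_i}_{i∈ℤ} ⊆ ℝ^{l×n} satisfy M_iᵀ N_j = M_{i+k}ᵀ N_{j+k} for all i, j, k ∈ ℤ. Suppose some x ∈ ℝ^n lies in ker(N_{i₀}) for some i₀, and suppose the sum of the column spaces ∑_{k∈ℤ} im(M_k) equals ℝ^l. Then x ∈ ker(N_j) for every j ∈ ℤ. -/
open Matrix

theorem stmt5 {l m n : ℕ}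
    (M : ℤ → Matrix (Fin l) (Fin m) ℝ) (N : ℤ → Matrix (Fin l) (Fin n) ℝ)
    (hshift : ∀ i j k : ℤ, (M i)ᵀ * N j = (M (i + k))ᵀ * N (j + k))
    (hspan : (⨆ k : ℤ, LinearMap.range (M k).mulVecLin) = ⊤)
    (x : Fin n → ℝ) (i₀ : ℤ) (hx : x ∈ LinearMap.ker (N i₀).mulVecLin) :
    ∀ j : ℤ, x ∈ LinearMap.ker (N j).mulVecLin := by
  rw [LinearMap.mem_ker, mulVecLin_apply] at hx
  intro j
  rw [LinearMap.mem_ker, mulVecLin_apply]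
  set v : Fin l → ℝ := (N j).mulVec x with hv
  -- key: (M k)ᵀ *ᵥ v = 0 for all k
  have key : ∀ k : ℤ, (M k)ᵀ.mulVec v = 0 := by
    intro k
    have h1 : (M k)ᵀ.mulVec v = ((M k)ᵀ * N j).mulVec x := by
      rw [hv, mulVec_mulVec]
    rw [h1, hshift k j (i₀ - j)]
    have : j + (i₀ - j) = i₀ := by ring
    rw [this, ← mulVec_mulVec, hx, mulVec_zero]
  -- linear functional y ↦ v ⬝ᵥ y
  let f : (Fin l → ℝ) →ₗ[ℝ] ℝ :=
    { toFun := fun y => v ⬝ᵥ y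
      map_add' := fun a b => dotProduct_add v a b
      map_smul' := fun c a => by simp [dotProduct_smul] }
  have hker : ∀ y : Fin l → ℝ, f y = 0 := by
    have hle : (⨆ k : ℤ, LinearMap.range (M k).mulVecLin) ≤ LinearMap.ker f := by
      apply iSup_le
      intro k
      rintro y ⟨u, rfl⟩
      rw [LinearMap.mem_ker]
      show v ⬝ᵥ (M k).mulVec u = 0
      rw [dotProduct_mulVec, ← mulVec_transpose, key k, zero_dotProduct]
    rw [hspan, top_le_iff] at hle
    intro y
    have : y ∈ LinearMap.ker f := by rw [hle]; trivial
    exact this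
  have : v ⬝ᵥ v = 0 := hker v
  exact dotProduct_self_eq_zero.mp this
end

section
/- Let {M'_i}_{i∈ℤ} and {N'_i}_{i∈ℤ} be families of invertible l'×l' real matrices satisfying (M'_i)ᵀ N'_j = (M'_{i+k})ᵀ N'_{j+k} for all i, j, k ∈ ℤ. Then there exist invertible matrices A, B ∈ ℝ^{l'×l'} with N'_i = A^i N'_0 and M'_i = B^i M'_0 for all i ∈ ℤ, and moreover B = A^{-⊤} (the inverse transpose of A). -/
/-! Taking `k = 1` in the shift relation gives `N (j + 1) = A * N j` with `A = (M 1)ᵀ⁻¹ * (M 0)ᵀ`;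
against the invertible `N 0` it gives `(M (i + 1))ᵀ * A = (M i)ᵀ`, i.e. `M (i + 1) = A⁻¹ᵀ * M i`.
A first-order recursion by an invertible matrix is solved by its integer powers. -/

open Matrix

namespace Matrix

variable {n m R : Type*} [Fintype n] [DecidableEq n] [CommRing R]

theorem eq_zpow_mul_of_forall_succ_eq_mul {A : Matrix n n R} (hA : IsUnit A.det)
    {f : ℤ → Matrix n m R} (hf : ∀ j, f (j + 1) = A * f j) (i : ℤ) : f i = A ^ i * f 0 := by
  induction i using Int.induction_on with
  | zero => simp
  | succ k ih => rw [hf, ih, add_comm, zpow_one_add hA, Matrix.mul_assoc]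
  | pred k ih =>
    have hpred : f (-k - 1) = A⁻¹ * f (-k) := by
      rw [← nonsing_inv_mul_cancel_left A (f (-k - 1)) hA, ← hf, sub_add_cancel]
    rw [hpred, ih, sub_eq_neg_add, zpow_add hA, zpow_neg_one, Matrix.mul_assoc]

variable {M N : ℤ → Matrix n n R}
  (hshift : ∀ i j k : ℤ, (M i)ᵀ * N j = (M (i + k))ᵀ * N (j + k))
include hshift

theorem succ_eq_mul_of_shift_invariant (hM₁ : IsUnit (M 1).det) (j : ℤ) :
    N (j + 1) = ((M 1)ᵀ⁻¹ * (M 0)ᵀ) * N j := by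
  have hM₁t : IsUnit (M 1)ᵀ.det := by rwa [det_transpose]
  rw [mul_assoc, hshift 0 j 1, zero_add, nonsing_inv_mul_cancel_left _ _ hM₁t]

theorem succ_eq_transpose_inv_mul_of_shift_invariant {A : Matrix n n R} (hA : IsUnit A.det)
    (hN₀ : IsUnit (N 0).det) (hN₁ : N 1 = A * N 0) (i : ℤ) : M (i + 1) = A⁻¹ᵀ * M i := by
  have hcancel : (M (i + 1))ᵀ * A = (M i)ᵀ :=
    calc (M (i + 1))ᵀ * A = (M (i + 1))ᵀ * A * N 0 * (N 0)⁻¹ :=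
          (mul_nonsing_inv_cancel_right _ _ hN₀).symm
      _ = (M i)ᵀ * N 0 * (N 0)⁻¹ := by rw [Matrix.mul_assoc _ A, ← hN₁, hshift i 0 1, zero_add]
      _ = (M i)ᵀ := mul_nonsing_inv_cancel_right _ _ hN₀
  have hsucc : (M (i + 1))ᵀ = (M i)ᵀ * A⁻¹ := by
    rw [← hcancel, mul_nonsing_inv_cancel_right _ _ hA]
  rw [← transpose_transpose (M (i + 1)), hsucc, transpose_mul, transpose_transpose]

end Matrix

theorem stmt8 {l' : ℕ}
    (M N : ℤ → Matrix (Fin l') (Fin l') ℝ)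
    (hMunit : ∀ i : ℤ, IsUnit ((M i).det)) (hNunit : ∀ i : ℤ, IsUnit ((N i).det))
    (hshift : ∀ i j k : ℤ, (M i)ᵀ * N j = (M (i + k))ᵀ * N (j + k)) :
    ∃ A B : Matrix (Fin l') (Fin l') ℝ, IsUnit A.det ∧ IsUnit B.det ∧
      (∀ i : ℤ, N i = A ^ i * N 0) ∧ (∀ i : ℤ, M i = B ^ i * M 0) ∧ B = (A⁻¹)ᵀ := by
  set A := (M 1)ᵀ⁻¹ * (M 0)ᵀ
  have hA : IsUnit A.det := by
    rw [det_mul, det_nonsing_inv, det_transpose, det_transpose]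
    exact (isUnit_ringInverse.mpr (hMunit 1)).mul (hMunit 0)
  have hB : IsUnit A⁻¹ᵀ.det := by rw [det_transpose]; exact isUnit_nonsing_inv_det _ hA
  have hNsucc := succ_eq_mul_of_shift_invariant hshift (hMunit 1)
  have hN₁ : N 1 = A * N 0 := by simpa using hNsucc 0
  have hMsucc := succ_eq_transpose_inv_mul_of_shift_invariant hshift hA (hNunit 0) hN₁
  exact ⟨A, A⁻¹ᵀ, hA, hB, eq_zpow_mul_of_forall_succ_eq_mul hA hNsucc,
    eq_zpow_mul_of_forall_succ_eq_mul hB hMsucc, rfl⟩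
end

section
/- Let {M_i}_{i∈ℤ} ⊆ ℝ^{l×m}, {N_i}_{i∈ℤ} ⊆ ℝ^{l×n}. Then M_iᵀ N_j depends only on i − j (i.e., M_iᵀ N_j = M_{i+k}ᵀ N_{j+k} for all i,j,k ∈ ℤ) if and only if there exist an integer l', matrices P ∈ ℝ^{l'×m}, Q ∈ ℝ^{l'×n}, and an invertible matrix A ∈ ℝ^{l'×l'} such that M_iᵀ N_j = ((A^{-i})ᵀ P)ᵀ (A^j Q) for all i, j ∈ ℤ. -/
/-!
Shift-invariance says that `(M i)ᵀ * N j = G (j - i)` with `G d = (M 0)ᵀ * N d`, and moreover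
`G (d + k) = (M (-d))ᵀ * N k`. Hence the translates `d ↦ G (d + k) *ᵥ v` span a space of
sequences that is invariant under the shift and lies in the image of `u ↦ (d ↦ (M (-d))ᵀ *ᵥ u)`,
so it is finite-dimensional. The shift restricts to an automorphism `A` of this space, and
`G d *ᵥ v` is read off by applying `A ^ d` to the sequence `d ↦ G d *ᵥ v` and evaluating at `0`:
in a basis this is `G d = Pᵀ * A ^ d * Q`.
-/

namespace ShiftRealization

variable {K X Y Z : Type*} [Field K] [AddCommGroup X] [Module K X] [AddCommGroup Y]
  [Module K Y] [AddCommGroup Z] [Module K Z]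

variable (K X) in
noncomputable def seqShift : (ℤ → X) ≃ₗ[K] (ℤ → X) :=
  LinearEquiv.funCongrLeft K X (Equiv.addRight 1)

@[simp] lemma seqShift_apply (g : ℤ → X) (i : ℤ) : seqShift K X g i = g (i + 1) := rfl

@[simp] lemma seqShift_symm_apply (g : ℤ → X) (i : ℤ) :
    (seqShift K X).symm g i = g (i - 1) :=
  rfl

variable (G : ℤ → Y →ₗ[K] X)

noncomputable def translate (k : ℤ) : Y →ₗ[K] (ℤ → X) :=
  LinearMap.pi fun d => G (d + k)

@[simp] lemma translate_apply (k : ℤ) (y : Y) (d : ℤ) : translate G k y d = G (d + k) y := rfl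

lemma seqShift_comp_translate (k : ℤ) :
    (seqShift K X : (ℤ → X) →ₗ[K] (ℤ → X)) ∘ₗ translate G k = translate G (k + 1) := by
  ext y d
  simp [add_assoc, add_comm k]

noncomputable def orbitSpace : Submodule K (ℤ → X) :=
  ⨆ k, LinearMap.range (translate G k)

lemma map_seqShift_orbitSpace :
    (orbitSpace G).map (seqShift K X : (ℤ → X) →ₗ[K] (ℤ → X)) = orbitSpace G := by
  simp only [orbitSpace, Submodule.map_iSup, ← LinearMap.range_comp, seqShift_comp_translate]
  exact (Equiv.addRight (1 : ℤ)).iSup_congr fun _ => rfl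

noncomputable def orbitShift : orbitSpace G ≃ₗ[K] orbitSpace G :=
  (seqShift K X).ofSubmodules _ _ (map_seqShift_orbitSpace G)

lemma orbitShift_zpow_apply (d : ℤ) (w : orbitSpace G) (i : ℤ) :
    ((orbitShift G ^ d) w : ℤ → X) i = (w : ℤ → X) (i + d) := by
  induction d using Int.induction_on generalizing w i with
  | zero => simp
  | succ d ih =>
    rw [_root_.zpow_add_one, LinearEquiv.mul_apply, ih]
    simp [orbitShift, add_assoc]
  | pred d ih =>
    rw [_root_.zpow_sub_one, LinearEquiv.mul_apply, ih, LinearEquiv.coe_inv]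
    simp [orbitShift, add_sub_assoc]

noncomputable def orbitEval : orbitSpace G →ₗ[K] X :=
  LinearMap.proj 0 ∘ₗ (orbitSpace G).subtype

noncomputable def orbitInput : Y →ₗ[K] orbitSpace G :=
  (translate G 0).codRestrict _ fun y =>
    Submodule.mem_iSup_of_mem 0 (LinearMap.mem_range_self _ y)

@[simp] lemma orbitInput_apply (y : Y) : (orbitInput G y : ℤ → X) = translate G 0 y := rfl

theorem orbitEval_comp_zpow_comp_orbitInput (d : ℤ) :
    orbitEval G ∘ₗ (orbitShift G ^ d).toLinearMap ∘ₗ orbitInput G = G d := by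
  ext y
  simp [orbitEval, orbitShift_zpow_apply]

lemma orbitSpace_le_range (U : ℤ → Z →ₗ[K] X) (V : ℤ → Y →ₗ[K] Z)
    (hUV : ∀ d k, G (d + k) = U d ∘ₗ V k) :
    orbitSpace G ≤ LinearMap.range (LinearMap.pi U) := by
  refine iSup_le fun k => ?_
  rintro _ ⟨y, rfl⟩
  exact ⟨V k y, funext fun d => by simp [hUV]⟩

end ShiftRealization

theorem LinearEquiv.toMatrix_zpow {R M ι : Type*} [CommRing R] [AddCommGroup M] [Module R M]
    [Fintype ι] [DecidableEq ι] (B : Module.Basis ι R M) (e : M ≃ₗ[R] M) (d : ℤ) :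
    LinearMap.toMatrix B B (e ^ d : M ≃ₗ[R] M) = LinearMap.toMatrix B B e ^ d := by
  let u := Units.map (LinearMap.toMatrixAlgEquiv B).toMonoidHom
    ((LinearMap.GeneralLinearGroup.generalLinearEquiv R M).symm e)
  have := Matrix.coe_units_zpow u d
  simp only [u, ← map_zpow] at this
  exact this

open ShiftRealization in
theorem Matrix.exists_zpow_realization {K m n l : Type*} [Field K] [Fintype m] [Fintype n]
    [Fintype l] (G : ℤ → Matrix m n K) (U : ℤ → Matrix m l K) (V : ℤ → Matrix l n K)
    (hUV : ∀ d k, G (d + k) = U d * V k) :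
    ∃ (l' : ℕ) (P : Matrix m (Fin l') K) (Q : Matrix (Fin l') n K)
      (A : Matrix (Fin l') (Fin l') K), IsUnit A.det ∧ ∀ d, G d = P * A ^ d * Q := by
  classical
  let G' d := Matrix.toLin' (G d)
  have : FiniteDimensional K (orbitSpace G') :=
    Submodule.finiteDimensional_of_le <| orbitSpace_le_range G' (fun d => (U d).toLin')
      (fun k => (V k).toLin') fun d k => by simp [G', hUV, Matrix.toLin'_mul]
  let B := Module.finBasis K (orbitSpace G')
  refine ⟨_, LinearMap.toMatrix B (Pi.basisFun K m) (orbitEval G'),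
    LinearMap.toMatrix (Pi.basisFun K n) B (orbitInput G'),
    LinearMap.toMatrix B B (orbitShift G'), LinearEquiv.isUnit_det _ B B, fun d => ?_⟩
  rw [← LinearEquiv.toMatrix_zpow, ← LinearMap.toMatrix_comp, ← LinearMap.toMatrix_comp,
    LinearMap.comp_assoc, orbitEval_comp_zpow_comp_orbitInput]
  simp only [G', ← Matrix.toLin_eq_toLin', LinearMap.toMatrix_toLin]

open Matrix

lemma Matrix.transpose_zpow_neg_mul_transpose_mul_zpow {R ι m n : Type*} [CommRing R]
    [Fintype ι] [DecidableEq ι] {A : Matrix ι ι R} (hA : IsUnit A.det) (P : Matrix ι m R)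
    (Q : Matrix ι n R) (i j : ℤ) :
    ((A ^ (-i))ᵀ * P)ᵀ * (A ^ j * Q) = Pᵀ * A ^ (j - i) * Q := by
  rw [transpose_mul, transpose_transpose, sub_eq_neg_add, zpow_add hA, Matrix.mul_assoc,
    Matrix.mul_assoc, Matrix.mul_assoc]

theorem stmt9 {l m n : ℕ}
    (M : ℤ → Matrix (Fin l) (Fin m) ℝ) (N : ℤ → Matrix (Fin l) (Fin n) ℝ) :
    (∀ i j k : ℤ, (M i)ᵀ * N j = (M (i + k))ᵀ * N (j + k)) ↔
      ∃ (l' : ℕ) (P : Matrix (Fin l') (Fin m) ℝ) (Q : Matrix (Fin l') (Fin n) ℝ)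
        (A : Matrix (Fin l') (Fin l') ℝ), IsUnit A.det ∧
        ∀ i j : ℤ, (M i)ᵀ * N j = ((A ^ (-i))ᵀ * P)ᵀ * (A ^ j * Q) := by
  constructor
  · intro h
    obtain ⟨l', P, Q, A, hA, hPAQ⟩ := exists_zpow_realization (fun d => (M 0)ᵀ * N d)
      (fun d => (M (-d))ᵀ) N fun d k => by simpa [add_comm k] using (h (-d) k d).symm
    refine ⟨l', Pᵀ, Q, A, hA, fun i j => ?_⟩
    rw [transpose_zpow_neg_mul_transpose_mul_zpow hA, transpose_transpose, ← hPAQ]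
    simpa [sub_eq_neg_add, add_comm] using h i j (-i)
  · rintro ⟨l', P, Q, A, hA, hPAQ⟩ i j k
    simp only [hPAQ, transpose_zpow_neg_mul_transpose_mul_zpow hA, add_sub_add_right_eq_sub]
end
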